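/- arXiv:1604.01757 — 5 statements merged into one kernel-verified Lean document; each statement's English description precedes it below -/
import Mathlib

section
/- Let s be an element of a finite semigroup S that does not generate a group, and suppose s is regular, i.e., sus = s for some u ∈ S. Let e be the idempotent power of su and f the idempotent power of us. Then es = s, sf = s, and every product a₁⋯a_k with each a_i ∈ {s, e, f} in which s occurs at least twice is strictly J-below s (in particular, it does not equal s). -/
/-- `a ≤_J b` in a semigroup `S`: the principal ideal condition `S¹aS¹ ⊆ S¹bS¹`,
i.e. `a = u * b * v` for some `u v ∈ S¹`. -/
def JLe {S : Type*} [Semigroup S] (a b : S) : Prop :=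
  ∃ u v : WithOne S, (a : WithOne S) = u * (b : WithOne S) * v

/-- Green's `J`-equivalence. -/
def JEquiv {S : Type*} [Semigroup S] (a b : S) : Prop := JLe a b ∧ JLe b a

/-- `a` is strictly `J`-below `b`. -/
def JLt {S : Type*} [Semigroup S] (a b : S) : Prop := JLe a b ∧ ¬ JLe b a

/-- `s` generates a group: the cyclic subsemigroup generated by `s` is a group,
i.e. it contains a two-sided identity and inverses. -/
def GeneratesGroup {S : Type*} [Semigroup S] (s : S) : Prop :=
  ∃ e ∈ Subsemigroup.closure {s},
    (∀ x ∈ Subsemigroup.closure {s}, e * x = x ∧ x * e = x) ∧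
    ∀ x ∈ Subsemigroup.closure {s}, ∃ y ∈ Subsemigroup.closure {s}, x * y = e ∧ y * x = e


/-- `sPow s n = s ^ (n + 1)` : the `(n+1)`-st power of `s` in a semigroup. -/
def sPow {S : Type*} [Mul S] (s : S) : ℕ → S
  | 0 => s
  | n + 1 => sPow s n * s


/-- The product `a₁ ⋯ aₖ` of a nonempty list, given as head `a` and tail `l`,
with respect to a multiplication `mul`. -/
def listProd {α : Type*} (mul : α → α → α) : α → List α → α
  | a, [] => a
  | a, b :: l => mul a (listProd mul b l)


private instance withOneFinite {S : Type*} [Finite S] : Finite (WithOne S) :=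
  Finite.of_equiv (S ⊕ PUnit.{1}) (Equiv.optionEquivSumPUnit.{0} S).symm

/-- In a finite monoid, every element has an idempotent power with positive exponent. -/
private lemma aux_idem_pow {M : Type*} [Monoid M] [Finite M] (t : M) :
    ∃ n, 1 ≤ n ∧ t ^ n * t ^ n = t ^ n := by
  obtain ⟨i, j, hne, hij⟩ := Finite.exists_ne_map_eq_of_infinite (fun n : ℕ => t ^ (n + 1))
  wlog h : i < j generalizing i j
  · exact this j i hne.symm hij.symm (by omega)
  set a := i + 1 with ha
  obtain ⟨p, hp1, hpe⟩ : ∃ p, 1 ≤ p ∧ t ^ a = t ^ (a + p) := by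
    refine ⟨j - i, by omega, ?_⟩
    have : a + (j - i) = j + 1 := by omega
    rw [this]; exact hij
  have hper : ∀ b, t ^ (a + b) = t ^ (a + b + p) := by
    intro b
    calc t ^ (a + b) = t ^ a * t ^ b := pow_add t a b
      _ = t ^ (a + p) * t ^ b := by rw [← hpe]
      _ = t ^ (a + b + p) := by rw [← pow_add]; congr 1; omega
  have hper2 : ∀ k b, t ^ (a + b + k * p) = t ^ (a + b) := by
    intro k
    induction k with
    | zero => intro b; simp
    | succ k ih =>
      intro b
      have h1 : a + b + (k + 1) * p = a + (b + p) + k * p := by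
        have : (k + 1) * p = k * p + p := Nat.succ_mul k p
        omega
      rw [h1, ih (b + p)]
      have h3 : a + (b + p) = a + b + p := by omega
      rw [h3, ← hper b]
  have hle : a ≤ a * p := Nat.le_mul_of_pos_right a (by omega)
  refine ⟨a * p, by nlinarith, ?_⟩
  rw [← pow_add]
  calc t ^ (a * p + a * p) = t ^ (a + (a * p - a) + a * p) := by congr 1; omega
    _ = t ^ (a + (a * p - a)) := hper2 a (a * p - a)
    _ = t ^ (a * p) := by congr 1; omega

private lemma sPow_add' {S : Type*} [Semigroup S] (s : S) (a b : ℕ) :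
    sPow s a * sPow s b = sPow s (a + b + 1) := by
  induction b with
  | zero => rfl
  | succ b ih =>
    show sPow s a * (sPow s b * s) = _
    rw [← mul_assoc, ih]
    rfl

private lemma coe_sPow {S : Type*} [Semigroup S] (s : S) :
    ∀ n, ((sPow s n : S) : WithOne S) = (s : WithOne S) ^ (n + 1)
  | 0 => (pow_one _).symm
  | n + 1 => by
    show ((sPow s n * s : S) : WithOne S) = _
    rw [WithOne.coe_mul, coe_sPow s n, ← pow_succ]

private lemma aux_gen_group {S : Type*} [Semigroup S] (s : S) (m : ℕ) (hm : 1 ≤ m)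
    (h : sPow s m = s) : GeneratesGroup s := by
  obtain ⟨q, rfl⟩ : ∃ q, m = q + 1 := ⟨m - 1, by omega⟩
  have hper1 : ∀ k, sPow s (k + (q + 1)) = sPow s k := by
    intro k
    induction k with
    | zero => rw [Nat.zero_add]; exact h
    | succ k ih =>
      have h1 : k + 1 + (q + 1) = (k + (q + 1)) + 1 := by omega
      rw [h1]
      show sPow s (k + (q + 1)) * s = sPow s k * s
      rw [ih]
  have hperk : ∀ j k, sPow s (k + j * (q + 1)) = sPow s k := by
    intro j
    induction j with
    | zero => intro k; simp
    | succ j ih =>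
      intro k
      have h1 : k + (j + 1) * (q + 1) = (k + (q + 1)) + j * (q + 1) := by
        have : (j + 1) * (q + 1) = j * (q + 1) + (q + 1) := Nat.succ_mul j (q + 1)
        omega
      rw [h1, ih (k + (q + 1)), hper1 k]
  have hmem : ∀ n, sPow s n ∈ Subsemigroup.closure {s} := by
    intro n
    induction n with
    | zero => exact Subsemigroup.subset_closure (Set.mem_singleton s)
    | succ n ih => exact mul_mem ih (Subsemigroup.subset_closure (Set.mem_singleton s))
  have hchar : ∀ x ∈ Subsemigroup.closure {s}, ∃ n, sPow s n = x := by
    let T : Subsemigroup S :=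
      { carrier := Set.range (sPow s)
        mul_mem' := by
          rintro x y ⟨a, rfl⟩ ⟨b, rfl⟩
          exact ⟨a + b + 1, (sPow_add' s a b).symm⟩ }
    have hT : Subsemigroup.closure {s} ≤ T :=
      Subsemigroup.closure_le.mpr (Set.singleton_subset_iff.mpr ⟨0, rfl⟩)
    exact fun x hx => hT hx
  refine ⟨sPow s q, hmem q, ?_, ?_⟩
  · intro x hx
    obtain ⟨n, rfl⟩ := hchar x hx
    constructor
    · rw [sPow_add']
      have h1 : q + n + 1 = n + (q + 1) := by omega
      rw [h1, hper1]
    · rw [sPow_add']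
      have h1 : n + q + 1 = n + (q + 1) := by omega
      rw [h1, hper1]
  · intro x hx
    obtain ⟨n, rfl⟩ := hchar x hx
    refine ⟨sPow s ((n + 2) * q), hmem _, ?_, ?_⟩
    · rw [sPow_add']
      have h1 : n + (n + 2) * q + 1 = q + (n + 1) * (q + 1) := by ring
      rw [h1]
      exact hperk (n + 1) q
    · rw [sPow_add']
      have h1 : (n + 2) * q + n + 1 = q + (n + 1) * (q + 1) := by ring
      rw [h1]
      exact hperk (n + 1) q

/-- If `s ≤_J s²` then `s` generates a group. -/
private lemma aux_sq {S : Type*} [Semigroup S] [Finite S] (s : S) (x y : WithOne S)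
    (h : (s : WithOne S) = x * (s : WithOne S) * (s : WithOne S) * y) : GeneratesGroup s := by
  set t : WithOne S := (s : WithOne S) with ht
  have h1 : t = x * t * (t * y) := h.trans (mul_assoc _ _ _)
  have hn : ∀ n, t = x ^ n * t * (t * y) ^ n := by
    intro n
    induction n with
    | zero => simp
    | succ n ih =>
      calc t = x ^ n * t * (t * y) ^ n := ih
        _ = x ^ n * (x * t * (t * y)) * (t * y) ^ n := by rw [← h1]
        _ = x ^ (n + 1) * t * (t * y) ^ (n + 1) := by
            rw [pow_succ x n, pow_succ' (t * y) n]
            simp [mul_assoc]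
  obtain ⟨n, hn1, hzn⟩ := aux_idem_pow ((t : WithOne S) * y)
  have hsz : t * (t * y) ^ n = t := by
    calc t * (t * y) ^ n = (x ^ n * t * (t * y) ^ n) * (t * y) ^ n :=
          congrArg (fun w => w * (t * y) ^ n) (hn n)
      _ = (x ^ n * t) * ((t * y) ^ n * (t * y) ^ n) := by rw [mul_assoc]
      _ = x ^ n * t * (t * y) ^ n := by rw [hzn]
      _ = t := (hn n).symm
  obtain ⟨k, rfl⟩ : ∃ k, n = k + 1 := ⟨n - 1, by omega⟩
  obtain ⟨c, hc⟩ : ∃ c, t = t * t * c := by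
    refine ⟨y * (t * y) ^ k, ?_⟩
    calc t = t * (t * y) ^ (k + 1) := hsz.symm
      _ = t * t * (y * (t * y) ^ k) := by
          rw [pow_succ' (t * y) k]
          simp [mul_assoc]
  have hs4 : ∀ m, t = t ^ (m + 1) * c ^ m := by
    intro m
    induction m with
    | zero => simp
    | succ m ih =>
      have h2 : t ^ (m + 1) * c ^ m = t ^ m * (t * t * c) * c ^ m := by
        rw [pow_succ t m, ← hc]
      calc t = t ^ (m + 1) * c ^ m := ih
        _ = t ^ m * (t * t * c) * c ^ m := h2
        _ = t ^ (m + 1 + 1) * c ^ (m + 1) := by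
            rw [pow_succ t (m + 1), pow_succ t m, pow_succ' c m]
            simp [mul_assoc]
  obtain ⟨m, hm1, hsm⟩ := aux_idem_pow t
  obtain ⟨w, hw⟩ : ∃ w, t = t ^ m * w := by
    refine ⟨t * c ^ m, ?_⟩
    calc t = t ^ (m + 1) * c ^ m := hs4 m
      _ = t ^ m * (t * c ^ m) := by rw [pow_succ t m, mul_assoc]
  have h5 : t ^ m * t = t := by
    calc t ^ m * t = t ^ m * (t ^ m * w) := congrArg (fun z => t ^ m * z) hw
      _ = (t ^ m * t ^ m) * w := (mul_assoc _ _ _).symm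
      _ = t ^ m * w := by rw [hsm]
      _ = t := hw.symm
  have h6 : t ^ (m + 1) = t := (pow_succ t m).trans h5
  have h7 : ((sPow s m : S) : WithOne S) = ((s : S) : WithOne S) := (coe_sPow s m).trans h6
  exact aux_gen_group s m hm1 (WithOne.coe_inj.mp h7)

private def prodM {S : Type*} [Semigroup S] (l : List S) : WithOne S :=
  (l.map (fun x => (x : WithOne S))).prod

private lemma prodM_nil {S : Type*} [Semigroup S] : prodM ([] : List S) = 1 := rfl

private lemma prodM_cons {S : Type*} [Semigroup S] (a : S) (l : List S) :
    prodM (a :: l) = (a : WithOne S) * prodM l := by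
  simp [prodM]

private lemma coe_listProd {S : Type*} [Semigroup S] :
    ∀ (a : S) (l : List S),
      ((listProd (· * ·) a l : S) : WithOne S) = (a : WithOne S) * prodM l
  | a, [] => by simp [listProd, prodM]
  | a, b :: l => by
    show ((a * listProd (· * ·) b l : S) : WithOne S) = _
    rw [WithOne.coe_mul, coe_listProd b l, prodM_cons]
/-- If a regular element `s` (with `sus = s`) of a finite semigroup does not generate a group,
and `e`, `f` are the idempotent powers of `su` and `us`, then `es = s`, `sf = s`, and every
product of elements of `{s, e, f}` in which `s` occurs at least twice is strictly `J`-below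
`s` (in particular it is not `s`). -/
theorem stmt_2 {S : Type*} [Semigroup S] [Finite S] [DecidableEq S] (s u e f : S)
    (hng : ¬ GeneratesGroup s) (hreg : s * u * s = s)
    (he : ∃ m, sPow (s * u) m = e) (hee : e * e = e)
    (hf : ∃ m, sPow (u * s) m = f) (hff : f * f = f) :
    e * s = s ∧ s * f = s ∧
      ∀ (a : S) (l : List S), a ∈ ({s, e, f} : Set S) → (∀ x ∈ l, x ∈ ({s, e, f} : Set S)) →
        2 ≤ (a :: l).count s → JLt (listProd (· * ·) a l) s := by
  obtain ⟨me, hme⟩ := he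
  obtain ⟨mf, hmf⟩ := hf
  -- e * s = s
  have hesn : ∀ n, sPow (s * u) n * s = s := by
    intro n
    induction n with
    | zero => exact hreg
    | succ n ih =>
      show sPow (s * u) n * (s * u) * s = s
      rw [mul_assoc, hreg, ih]
  have hes : e * s = s := by rw [← hme]; exact hesn me
  -- s * f = s
  have hsfn : ∀ n, s * sPow (u * s) n = s := by
    intro n
    induction n with
    | zero =>
      show s * (u * s) = s
      rw [← mul_assoc]; exact hreg
    | succ n ih =>
      show s * (sPow (u * s) n * (u * s)) = s
      rw [← mul_assoc, ih, ← mul_assoc]; exact hreg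
  have hsf : s * f = s := by rw [← hmf]; exact hsfn mf
  -- e = s * g
  have hegn : ∀ n, ∃ g, sPow (s * u) n = s * g := by
    intro n
    induction n with
    | zero => exact ⟨u, rfl⟩
    | succ n ih =>
      obtain ⟨g, hg⟩ := ih
      exact ⟨g * (s * u), by show sPow (s * u) n * (s * u) = _; rw [hg, mul_assoc]⟩
  obtain ⟨g, hg⟩ : ∃ g, e = s * g := by rw [← hme]; exact hegn me
  -- f = g' * s
  have hfgn : ∀ n, ∃ g', sPow (u * s) n = g' * s := by
    intro n
    induction n with
    | zero => exact ⟨u, rfl⟩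
    | succ n ih =>
      obtain ⟨g', hg'⟩ := ih
      exact ⟨g' * s * u, by
        show sPow (u * s) n * (u * s) = _
        rw [hg', ← mul_assoc]⟩
  obtain ⟨g', hg'⟩ : ∃ g', f = g' * s := by rw [← hmf]; exact hfgn mf
  -- Lemma A : s ⬝ (word in {e,f}) ⬝ s factors through s * s
  have hA : ∀ w : List S, (∀ x ∈ w, x = e ∨ x = f) →
      ∃ α β : WithOne S,
        (s : WithOne S) * prodM w * (s : WithOne S) = α * ((s : WithOne S) * s) * β := by
    intro w
    induction w with
    | nil => exact fun _ => ⟨1, 1, by simp [prodM_nil]⟩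
    | cons x w ih =>
      intro hx
      rcases hx x (by simp) with hxe | hxf
      · -- head is e = s * g
        refine ⟨1, (g : WithOne S) * prodM w * (s : WithOne S), ?_⟩
        have hcoe : (x : WithOne S) = (s : WithOne S) * g := by
          rw [hxe, hg, WithOne.coe_mul]
        rw [prodM_cons, hcoe]
        simp [mul_assoc]
      · -- head is f, and s * f = s
        obtain ⟨α, β, hab⟩ := ih (fun z hz => hx z (by simp [hz]))
        refine ⟨α, β, ?_⟩
        have hcoe : (s : WithOne S) * (x : WithOne S) = (s : WithOne S) := by
          rw [hxf, ← WithOne.coe_mul, hsf]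
        rw [prodM_cons, ← mul_assoc, hcoe]
        exact hab
  -- SPLIT1 : a list containing s factors as (word in {e,f}) ⬝ s ⬝ B
  have hS1 : ∀ L : List S, (∀ x ∈ L, x ∈ ({s, e, f} : Set S)) → 1 ≤ L.count s →
      ∃ (B : WithOne S) (w : List S), (∀ x ∈ w, x = e ∨ x = f) ∧
        prodM L = prodM w * (s : WithOne S) * B := by
    intro L
    induction L with
    | nil => intro _ hcnt; simp at hcnt
    | cons a L ih =>
      intro hmem hcnt
      by_cases has : a = s
      · subst has
        exact ⟨prodM L, [], by simp, by rw [prodM_cons, prodM_nil, one_mul]⟩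
      · have ha' : a = e ∨ a = f := by
          have := hmem a (by simp)
          simp only [Set.mem_insert_iff, Set.mem_singleton_iff] at this
          tauto
        have hcnt' : 1 ≤ L.count s := by
          simp only [List.count_cons] at hcnt
          simp only [beq_iff_eq, has, if_false] at hcnt
          omega
        obtain ⟨B, w, hw, hprod⟩ := ih (fun z hz => hmem z (by simp [hz])) hcnt'
        refine ⟨B, a :: w, ?_, ?_⟩
        · intro z hz
          rcases List.mem_cons.mp hz with rfl | hz
          · exact ha'
          · exact hw z hz
        · rw [prodM_cons, hprod, prodM_cons]
          simp [mul_assoc]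
  -- SPLIT2 : a list containing s twice factors as A ⬝ s ⬝ (word in {e,f}) ⬝ s ⬝ B
  have hS2 : ∀ L : List S, (∀ x ∈ L, x ∈ ({s, e, f} : Set S)) → 2 ≤ L.count s →
      ∃ (A B : WithOne S) (w : List S), (∀ x ∈ w, x = e ∨ x = f) ∧
        prodM L = A * (s : WithOne S) * prodM w * (s : WithOne S) * B := by
    intro L
    induction L with
    | nil => intro _ hcnt; simp at hcnt
    | cons a L ih =>
      intro hmem hcnt
      by_cases has : a = s
      · subst has
        have hcnt' : 1 ≤ L.count a := by
          simp only [List.count_cons] at hcnt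
          simp only [beq_self_eq_true, if_true] at hcnt
          omega
        obtain ⟨B, w, hw, hprod⟩ := hS1 L (fun z hz => hmem z (by simp [hz])) hcnt'
        refine ⟨1, B, w, hw, ?_⟩
        rw [prodM_cons, hprod]
        simp [mul_assoc]
      · have hcnt' : 2 ≤ L.count s := by
          simp only [List.count_cons] at hcnt
          simp only [beq_iff_eq, has, if_false] at hcnt
          omega
        obtain ⟨A, B, w, hw, hprod⟩ := ih (fun z hz => hmem z (by simp [hz])) hcnt'
        refine ⟨(a : WithOne S) * A, B, w, hw, ?_⟩
        rw [prodM_cons, hprod]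
        simp [mul_assoc]
  refine ⟨hes, hsf, ?_⟩
  intro a l ha hl hcnt
  constructor
  · -- listProd ≤_J s
    have hdec : ∃ α β : WithOne S, (a : WithOne S) = α * (s : WithOne S) * β := by
      simp only [Set.mem_insert_iff, Set.mem_singleton_iff] at ha
      rcases ha with rfl | rfl | rfl
      · exact ⟨1, 1, by simp⟩
      · exact ⟨1, (g : WithOne S), by rw [hg, WithOne.coe_mul, one_mul]⟩
      · exact ⟨(g' : WithOne S), 1, by rw [hg', WithOne.coe_mul, mul_one]⟩
    obtain ⟨α, β, hab⟩ := hdec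
    refine ⟨α, β * prodM l, ?_⟩
    rw [coe_listProd, hab]
    simp [mul_assoc]
  · -- s is not ≤_J listProd
    rintro ⟨x, y, hxy⟩
    rw [coe_listProd] at hxy
    have hxy' : (s : WithOne S) = x * prodM (a :: l) * y := by
      rw [prodM_cons]; exact hxy
    obtain ⟨A, B, w, hw, hprod⟩ := hS2 (a :: l)
      (by
        intro z hz
        rcases List.mem_cons.mp hz with rfl | hz
        · exact ha
        · exact hl z hz)
      hcnt
    obtain ⟨α, β, hss⟩ := hA w hw
    apply hng
    apply aux_sq s (x * A * α) (β * B * y)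
    calc (s : WithOne S) = x * prodM (a :: l) * y := hxy'
      _ = x * (A * (s : WithOne S) * prodM w * (s : WithOne S) * B) * y := by rw [hprod]
      _ = x * A * ((s : WithOne S) * prodM w * (s : WithOne S)) * (B * y) := by
          simp [mul_assoc]
      _ = x * A * (α * ((s : WithOne S) * s) * β) * (B * y) := by rw [hss]
      _ = x * A * α * (s : WithOne S) * (s : WithOne S) * (β * B * y) := by
          simp [mul_assoc]
end

section
/- Let f = y₁⋯y_k and g = z₁⋯z_ℓ be words over an alphabet X such that (1) the set of length-2 factors {y_i y_{i+1} : 1 ≤ i ≤ k−1} equals {z_j z_{j+1} : 1 ≤ j ≤ ℓ−1}, and (2) y₁ = z₁ and y_k = z_ℓ. Then for every combinatorial Rees matrix semigroup S_P and every map α from X to S_P, the products α(y₁)⋯α(y_k) and α(z₁)⋯α(z_ℓ) are equal. -/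
/-- Elements of the combinatorial Rees matrix semigroup `S_P = (I × Λ) ∪ {0}`. -/
inductive RM (I Λ : Type*) where
  | zero : RM I Λ
  | elt  : I → Λ → RM I Λ

/-- The multiplication of `S_P`: `[i,λ]·[j,μ] = [i,μ]` if `P(λ,j) = 1` and `0` otherwise,
with `0` a zero element. -/
def rmul {I Λ : Type*} (P : Λ → I → Bool) : RM I Λ → RM I Λ → RM I Λ
  | RM.elt i l, RM.elt j m => if P l j then RM.elt i m else RM.zero
  | _, _ => RM.zero


section Aux

variable {X I Λ : Type*} (P : Λ → I → Bool) (α : X → RM I Λ)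

/-- Combine: index of first, lambda of second. -/
def comb : RM I Λ → RM I Λ → RM I Λ
  | RM.elt i _, RM.elt _ m => RM.elt i m
  | _, _ => RM.zero

def good (a b : X) : Prop :=
  ∃ i l j m, α a = RM.elt i l ∧ α b = RM.elt j m ∧ P l j = true

lemma L0 : ∀ (ys : List X) (y : X),
    listProd (rmul P) (α y) (ys.map α) = RM.zero ∨
    ∃ j m m', α y = RM.elt j m ∧ listProd (rmul P) (α y) (ys.map α) = RM.elt j m' := by
  intro ys
  induction ys with
  | nil =>
    intro y
    cases h : α y with
    | zero => exact Or.inl (by simp [listProd, h])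
    | elt j m =>
      exact Or.inr ⟨j, m, m, rfl, by simp [listProd]⟩
  | cons b rest ih =>
    intro y
    have : listProd (rmul P) (α y) ((b :: rest).map α)
        = rmul P (α y) (listProd (rmul P) (α b) (rest.map α)) := rfl
    rw [this]
    rcases ih b with h | ⟨j, m, m', hb, hp⟩
    · rw [h]
      left; cases α y <;> rfl
    · rw [hp]
      cases hy : α y with
      | zero => left; rfl
      | elt i l =>
        by_cases hP : P l j
        · exact Or.inr ⟨i, l, m', rfl, by simp [rmul, hP]⟩
        · left; simp [rmul, hP]

lemma L1 : ∀ (ys : List X) (y : X),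
    (∀ p ∈ (y :: ys).zip ys, good P α p.1 p.2) →
    listProd (rmul P) (α y) (ys.map α)
      = comb (α y) (α ((y :: ys).getLast (by simp))) := by
  intro ys
  induction ys with
  | nil =>
    intro y _
    simp only [List.getLast]
    cases α y <;> simp [listProd, comb]
  | cons b rest ih =>
    intro y hg
    have hyb : good P α y b := hg (y, b) (by simp [List.zip])
    obtain ⟨i, l, j, m, hy, hb, hP⟩ := hyb
    have htail : ∀ p ∈ (b :: rest).zip rest, good P α p.1 p.2 := by
      intro p hp
      exact hg p (by simp [List.zip] at hp ⊢; tauto)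
    have hrec := ih b htail
    have hstep : listProd (rmul P) (α y) ((b :: rest).map α)
        = rmul P (α y) (listProd (rmul P) (α b) (rest.map α)) := rfl
    have hlastEq : (y :: b :: rest).getLast (by simp) = (b :: rest).getLast (by simp) := by
      simp [List.getLast]
    rw [hstep, hrec, hlastEq, hy]
    cases hL : α ((b :: rest).getLast (by simp)) with
    | zero => simp [comb, hb, rmul]
    | elt j' m' => simp [comb, hb, rmul, hP]

lemma L2 : ∀ (ys : List X) (y : X) (p : X × X), p ∈ (y :: ys).zip ys →
    ¬ good P α p.1 p.2 →
    listProd (rmul P) (α y) (ys.map α) = RM.zero := by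
  intro ys
  induction ys with
  | nil => intro y p hp; simp [List.zip] at hp
  | cons b rest ih =>
    intro y p hp hbad
    have hstep : listProd (rmul P) (α y) ((b :: rest).map α)
        = rmul P (α y) (listProd (rmul P) (α b) (rest.map α)) := rfl
    rw [hstep]
    rcases (by simpa [List.zip] using hp : p = (y, b) ∨ p ∈ (b :: rest).zip rest) with h | h
    · subst h
      rcases L0 P α rest b with h0 | ⟨j, m, m', hb, hpr⟩
      · rw [h0]; cases α y <;> rfl
      · rw [hpr]
        cases hy : α y with
        | zero => rfl
        | elt i l =>
          have hP : P l j = false := by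
            by_contra hc
            exact hbad ⟨i, l, j, m, hy, hb, by simpa using hc⟩
          simp [rmul, hP]
    · rw [ih b p h hbad]
      cases α y <;> rfl

end Aux

/-- If two words `f = y :: ys` and `g = z :: zs` over an alphabet `X` have the same set of
length-2 factors, the same first letter, and the same last letter, then every combinatorial
Rees matrix semigroup satisfies `f ≈ g`: under every assignment `α` of letters to elements,
the induced products agree. -/
theorem stmt_9 {X : Type*} (y z : X) (ys zs : List X)
    (hfac : ∀ p : X × X, p ∈ (y :: ys).zip ys ↔ p ∈ (z :: zs).zip zs)
    (hfirst : y = z)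
    (hlast : (y :: ys).getLast (by simp) = (z :: zs).getLast (by simp)) :
    ∀ (I Λ : Type) (P : Λ → I → Bool) (α : X → RM I Λ),
      listProd (rmul P) (α y) (ys.map α) = listProd (rmul P) (α z) (zs.map α) := by
  intro I Lam P α
  by_cases h : ∀ p ∈ (y :: ys).zip ys, good P α p.1 p.2
  · have hg : ∀ p ∈ (z :: zs).zip zs, good P α p.1 p.2 := by
      intro p hp; exact h p ((hfac p).mpr hp)
    rw [L1 P α ys y h, L1 P α zs z hg, hlast, hfirst]
  · push_neg at h
    obtain ⟨p, hp, hbad⟩ := h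
    rw [L2 P α ys y p hp hbad, L2 P α zs z p ((hfac p).mp hp) hbad]
end

section
/- Let f be a word over variables x₁, …, x_k. Then there exists a word g over x₁, …, x_k of length at most k(k²+1) such that every combinatorial Rees matrix semigroup satisfies the identity f ≈ g, i.e., for every combinatorial Rees matrix semigroup S_P and every assignment of the variables to elements of S_P, the products induced by f and g agree. -/
namespace List

variable {β γ : Type*}

def adjPairs : List β → List (β × β)
  | a :: b :: l => (a, b) :: adjPairs (b :: l)
  | _ => []

@[simp] theorem adjPairs_nil : ([] : List β).adjPairs = [] := rfl

@[simp] theorem adjPairs_singleton (a : β) : [a].adjPairs = [] := rfl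

@[simp] theorem adjPairs_cons_cons (a b : β) (l : List β) :
    (a :: b :: l).adjPairs = (a, b) :: (b :: l).adjPairs := rfl

theorem adjPairs_map (f : β → γ) : ∀ l : List β, (l.map f).adjPairs = l.adjPairs.map (Prod.map f f)
  | [] | [_] => rfl
  | a :: b :: l => by
    rw [map_cons, map_cons, adjPairs_cons_cons, ← map_cons, adjPairs_map f (b :: l)]
    rfl

theorem adjPairs_append_cons (a : β) : ∀ l r : List β,
    (l ++ a :: r).adjPairs = (l ++ [a]).adjPairs ++ (a :: r).adjPairs
  | [], _ | [_], _ => by simp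
  | x :: b :: l, r => by simpa using adjPairs_append_cons a (b :: l) r

theorem IsPrefix.adjPairs {l₁ l₂ : List β} (h : l₁ <+: l₂) : l₁.adjPairs <+: l₂.adjPairs := by
  obtain ⟨r, rfl⟩ := h
  induction l₁ with
  | nil => simp
  | cons a l ih =>
    cases l with
    | nil => cases r <;> simp
    | cons b l => simpa using ih

theorem exists_eq_append_cons_append_cons_of_getElem_eq {l : List β} {i j : ℕ} (hij : i < j)
    (hj : j < l.length) (h : l[i] = l[j]) :
    ∃ u m v, l = u ++ l[i] :: (m ++ l[i] :: v) ∧ l.take (i + 1) = u ++ [l[i]] ∧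
      l.take (j + 1) = u ++ l[i] :: (m ++ [l[i]]) := by
  have hj' : l.take (j + 1) = l.take i ++ [l[i]] ++ (l.take j).drop (i + 1) ++ [l[i]] := by
    rw [← take_append_getElem hj, ← h, take_append_getElem]
    congr 1
    conv_lhs => rw [← take_append_drop (i + 1) (l.take j)]
    rw [take_take, Nat.min_eq_left (by omega)]
  refine ⟨l.take i, (l.take j).drop (i + 1), l.drop (j + 1), ?_, (take_append_getElem _).symm,
    by simp only [hj', append_assoc, cons_append, nil_append]⟩
  conv_lhs => rw [← take_append_drop (j + 1) l, hj']
  simp only [append_assoc, cons_append, nil_append]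

end List

namespace RM

variable {I Λ : Type*}

def outer : RM I Λ → RM I Λ → RM I Λ
  | elt i _, elt _ m => elt i m
  | _, _ => zero

theorem outer_self (a : RM I Λ) : outer a a = a := by
  cases a <;> rfl

end RM

section ReesProducts

variable {I Λ : Type*} (P : Λ → I → Bool)

theorem rmul_zero_right (a : RM I Λ) : rmul P a RM.zero = RM.zero := by
  cases a <;> rfl

open Classical in
theorem rmul_outer (a b c : RM I Λ) :
    rmul P a (b.outer c) = if rmul P a b = RM.zero then RM.zero else a.outer c := by
  cases a <;> cases b <;> cases c <;> simp only [rmul, RM.outer] <;> split_ifs <;> simp_all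

open Classical in
theorem listProd_rmul (a : RM I Λ) (l : List (RM I Λ)) :
    listProd (rmul P) a l =
      if ∀ p ∈ (a :: l).adjPairs, rmul P p.1 p.2 ≠ RM.zero
      then a.outer ((a :: l).getLast (List.cons_ne_nil a l)) else RM.zero := by
  induction l generalizing a with
  | nil => simp [listProd, RM.outer_self]
  | cons b l ih =>
    simp only [listProd, ih, List.getLast_cons_cons, List.adjPairs_cons_cons, List.forall_mem_cons]
    split_ifs <;> simp_all [rmul_outer, rmul_zero_right]

end ReesProducts

section Words

variable {β : Type*} [DecidableEq β]

def wordShape (w : List β) : Option β × Option β × Finset (β × β) :=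
  (w.head?, w.getLast?, w.adjPairs.toFinset)

theorem listProd_map_eq_of_wordShape_eq {I Λ : Type*} (P : Λ → I → Bool) (α : β → RM I Λ)
    {y z : β} {ys zs : List β} (h : wordShape (y :: ys) = wordShape (z :: zs)) :
    listProd (rmul P) (α y) (ys.map α) = listProd (rmul P) (α z) (zs.map α) := by
  simp only [wordShape, List.head?_cons, Prod.mk.injEq, Option.some.injEq] at h
  obtain ⟨rfl, hlast, hpairs⟩ := h
  rw [List.getLast?_eq_some_getLast (List.cons_ne_nil _ _),
    List.getLast?_eq_some_getLast (List.cons_ne_nil _ _), Option.some_inj] at hlast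
  have hmem (p : β × β) : p ∈ (y :: ys).adjPairs ↔ p ∈ (y :: zs).adjPairs := by
    rw [← List.mem_toFinset, hpairs, List.mem_toFinset]
  have hcond : (∀ p ∈ (α y :: ys.map α).adjPairs, rmul P p.1 p.2 ≠ RM.zero) ↔
      ∀ p ∈ (α y :: zs.map α).adjPairs, rmul P p.1 p.2 ≠ RM.zero := by
    simp only [← List.map_cons, List.adjPairs_map, List.forall_mem_map, hmem]
  have hlast' : (α y :: ys.map α).getLast (List.cons_ne_nil _ _) =
      (α y :: zs.map α).getLast (List.cons_ne_nil _ _) := by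
    simp only [← List.map_cons, List.getLast_map, hlast]
  classical
  rw [listProd_rmul, listProd_rmul, hlast']
  exact if_congr hcond rfl rfl

theorem wordShape_append_cons_append_cons {u m v : List β} {a : β}
    (h : (a :: (m ++ [a])).adjPairs.toFinset ⊆ (u ++ [a]).adjPairs.toFinset) :
    wordShape (u ++ a :: (m ++ a :: v)) = wordShape (u ++ a :: v) := by
  have hpairs : (u ++ a :: (m ++ a :: v)).adjPairs =
      (u ++ [a]).adjPairs ++ ((a :: (m ++ [a])).adjPairs ++ (a :: v).adjPairs) := by
    rw [List.adjPairs_append_cons a u, ← List.cons_append, List.adjPairs_append_cons a (a :: m)]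
    rfl
  simp only [wordShape, Prod.mk.injEq]
  refine ⟨by simp [List.head?_append], ?_, ?_⟩
  · rw [List.getLast?_append_cons, List.getLast?_append_cons, ← List.cons_append,
      List.getLast?_append_cons]
  · rw [hpairs, List.adjPairs_append_cons a u v, List.toFinset_append, List.toFinset_append,
      List.toFinset_append, ← Finset.union_assoc, Finset.union_eq_left.2 h]

theorem exists_removable_factor [Fintype β] {w : List β}
    (hw : Fintype.card β * (Fintype.card β ^ 2 + 1) < w.length) :
    ∃ u a m v, w = u ++ a :: (m ++ a :: v) ∧
      (a :: (m ++ [a])).adjPairs.toFinset ⊆ (u ++ [a]).adjPairs.toFinset := by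
  let pairCount (t : ℕ) : ℕ := (w.take (t + 1)).adjPairs.toFinset.card
  have pairCount_lt (t : ℕ) : pairCount t < Fintype.card β ^ 2 + 1 :=
    Nat.lt_succ_of_le ((Finset.card_le_univ _).trans (by simp [sq]))
  obtain ⟨i, j, hne, hij⟩ := Fintype.exists_ne_map_eq_of_card_lt
    (fun t : Fin w.length => (w[t], (⟨pairCount t, pairCount_lt t⟩ : Fin _))) (by simpa using hw)
  wlog hlt : (i : ℕ) < j generalizing i j
  · exact this j i hne.symm hij.symm (lt_of_le_of_ne (not_lt.1 hlt) (Fin.val_ne_of_ne hne.symm))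
  simp only [Prod.mk.injEq, Fin.mk.injEq] at hij
  obtain ⟨u, m, v, hw, hi, hj⟩ :=
    List.exists_eq_append_cons_append_cons_of_getElem_eq hlt j.2 hij.1
  refine ⟨u, _, m, v, hw, ?_⟩
  have hsub : (w.take (i + 1)).adjPairs.toFinset ⊆ (w.take (j + 1)).adjPairs.toFinset :=
    fun p hp => List.mem_toFinset.2 <|
      (List.take_prefix_take_left (by omega)).adjPairs.subset (List.mem_toFinset.1 hp)
  have hprefix_eq := Finset.eq_of_subset_of_card_le hsub hij.2.ge
  rw [hi, hj, List.adjPairs_append_cons _ u (m ++ _), List.toFinset_append] at hprefix_eq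
  exact hprefix_eq ▸ Finset.subset_union_right

theorem exists_length_le_wordShape_eq [Fintype β] (w : List β) :
    ∃ w' : List β, w'.length ≤ Fintype.card β * (Fintype.card β ^ 2 + 1) ∧
      wordShape w' = wordShape w := by
  by_cases hw : w.length ≤ Fintype.card β * (Fintype.card β ^ 2 + 1)
  · exact ⟨w, hw, rfl⟩
  obtain ⟨u, a, m, v, rfl, hloop⟩ := exists_removable_factor (not_le.1 hw)
  obtain ⟨w', hlen, hw'⟩ := exists_length_le_wordShape_eq (u ++ a :: v)
  exact ⟨w', hlen, hw'.trans (wordShape_append_cons_append_cons hloop).symm⟩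
termination_by w.length
decreasing_by subst_vars; simp only [List.length_append, List.length_cons]; omega

end Words

/-- For every word `f = y :: ys` over variables `x₁, …, x_k` there is a word `g = z :: zs`
of length at most `k(k² + 1)` such that every combinatorial Rees matrix semigroup satisfies
the identity `f ≈ g`. -/
theorem stmt_10 (k : ℕ) (y : Fin k) (ys : List (Fin k)) :
    ∃ (z : Fin k) (zs : List (Fin k)), (z :: zs).length ≤ k * (k ^ 2 + 1) ∧
      ∀ (I Λ : Type) (P : Λ → I → Bool) (α : Fin k → RM I Λ),
        listProd (rmul P) (α y) (ys.map α) = listProd (rmul P) (α z) (zs.map α) := by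
  obtain ⟨w, hlen, hshape⟩ := exists_length_le_wordShape_eq (y :: ys)
  rw [Fintype.card_fin] at hlen
  obtain _ | ⟨z, zs⟩ := w
  · simp [wordShape] at hshape
  exact ⟨z, zs, hlen, fun I Λ P α => listProd_map_eq_of_wordShape_eq P α hshape.symm⟩
end

section
/- Let S_P be a combinatorial Rees matrix semigroup whose matrix P has one block, witnessed by J ⊆ I and Δ ⊆ Λ (so P(λ,i) = 1 iff (λ,i) ∈ Δ × J). Let n ∈ ℕ, A ⊆ S_P^n, b ∈ S_P^n, b ∉ A, and suppose b is a product g₁⋯g_k of elements of A with k ≥ 2. Let m be such that b(i) ≠ 0 iff i ≤ m, and let d be the product (in any fixed order) of all a ∈ A satisfying a(i) ∈ J × Δ for all i ≤ m. Then g₁ · d · g_k = b. -/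
/-- Coordinatewise multiplication on the direct power `S_P ^ n`. -/
def pmul {I Λ : Type*} (P : Λ → I → Bool) {n : ℕ} (a b : Fin n → RM I Λ) : Fin n → RM I Λ :=
  fun i => rmul P (a i) (b i)


/-
In a combinatorial Rees matrix semigroup a product `x₀ ⋯ xₖ` is nonzero exactly when every
adjacent pair has nonzero product, and it then equals `[row of x₀, column of xₖ]`. When `P` has
one block, `x · y ≠ 0` iff `x ∈ I × Δ` and `y ∈ J × Λ`, so for `k ≥ 1` the product is nonzero iff
`x₀ ∈ I × Δ`, `xₖ ∈ J × Λ` and every inner factor lies in `J × Δ`.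

Compare `g₁ ⋯ g_k` with `g₁ · d · g_k` coordinatewise. At a coordinate `i < m` the inner factors
`g₂, …, g_{k-1}` lie in `J × Δ`, so each of them is among the factors of `d`; conversely, all
factors of `d` lie in `J × Δ` at such coordinates. Hence both products are nonzero at exactly
the same coordinates, and there both equal `[row of g₁(i), column of g_k(i)]`.
-/

namespace RM

variable {I Λ : Type*}

/-- `[i, λ] · [j, μ] = [i, μ]` unconditionally (the rectangular band with zero): a nonzero product
in `S_P` is the `bandMul` of its first and last factors. -/
def bandMul : RM I Λ → RM I Λ → RM I Λ := rmul fun _ _ => true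

def RowIn (J : Set I) : RM I Λ → Prop
  | elt j _ => j ∈ J
  | zero => False

def ColIn (Δ : Set Λ) : RM I Λ → Prop
  | elt _ l => l ∈ Δ
  | zero => False

lemma colIn_and_rowIn_iff {J : Set I} {Δ : Set Λ} {x : RM I Λ} :
    ColIn Δ x ∧ RowIn J x ↔ ∃ j ∈ J, ∃ d ∈ Δ, x = elt j d := by
  cases x <;> simp [ColIn, RowIn, and_comm]

lemma bandMul_ne_zero {J : Set I} {Δ : Set Λ} {a z : RM I Λ} (ha : ColIn Δ a) (hz : RowIn J z) :
    bandMul a z ≠ zero := by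
  cases a <;> cases z <;> simp_all [ColIn, RowIn, bandMul, rmul]

variable (P : Λ → I → Bool)

lemma rmul_zero (a : RM I Λ) : rmul P a zero = zero := by
  cases a <;> rfl

lemma rmul_bandMul (a b z : RM I Λ) : rmul P a (bandMul b z) = bandMul (rmul P a b) z := by
  cases a <;> cases b <;> cases z <;> simp only [bandMul, rmul] <;> split_ifs <;> simp_all

lemma bandMul_rmul_of_ne_zero {a b : RM I Λ} (h : rmul P a b ≠ zero) (z : RM I Λ) :
    bandMul (rmul P a b) z = bandMul a z := by
  cases a <;> cases b <;> cases z <;> simp only [bandMul, rmul] at h ⊢ <;> split_ifs at h ⊢ <;> trivial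


theorem listProd_rmul_of_isChain {a : RM I Λ} {l : List (RM I Λ)}
    (h : (a :: l).IsChain fun x y => rmul P x y ≠ zero) :
    listProd (rmul P) a l = bandMul a ((a :: l).getLast (List.cons_ne_nil a l)) := by
  induction l generalizing a with
  | nil => cases a <;> rfl
  | cons b l ih =>
    rw [List.isChain_cons_cons] at h
    rw [listProd, ih h.2, rmul_bandMul, bandMul_rmul_of_ne_zero P h.1, List.getLast_cons_cons]

theorem listProd_rmul_of_not_isChain {a : RM I Λ} {l : List (RM I Λ)}
    (h : ¬(a :: l).IsChain fun x y => rmul P x y ≠ zero) :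
    listProd (rmul P) a l = zero := by
  induction l generalizing a with
  | nil => exact absurd (List.isChain_singleton a) h
  | cons b l ih =>
    rw [List.isChain_cons_cons, not_and'] at h
    rw [listProd]
    by_cases hc : (b :: l).IsChain fun x y => rmul P x y ≠ zero
    · rw [listProd_rmul_of_isChain P hc, rmul_bandMul, not_not.1 (h hc)]
      rfl
    · rw [ih hc, rmul_zero]

theorem listProd_rmul_of_ne_zero {a : RM I Λ} {l : List (RM I Λ)}
    (h : listProd (rmul P) a l ≠ zero) :
    listProd (rmul P) a l = bandMul a ((a :: l).getLast (List.cons_ne_nil a l)) :=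
  listProd_rmul_of_isChain P (by_contra fun hc => h (listProd_rmul_of_not_isChain P hc))

theorem listProd_rmul_append_singleton_congr {a z : RM I Λ} {l l' : List (RM I Λ)}
    (h : listProd (rmul P) a (l ++ [z]) ≠ zero ↔ listProd (rmul P) a (l' ++ [z]) ≠ zero) :
    listProd (rmul P) a (l ++ [z]) = listProd (rmul P) a (l' ++ [z]) := by
  by_cases hl : listProd (rmul P) a (l ++ [z]) = zero
  · rw [hl, eq_comm]
    exact not_not.1 (mt h.2 (not_not.2 hl))
  · rw [listProd_rmul_of_ne_zero P hl, listProd_rmul_of_ne_zero P (h.1 hl)]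
    simp

end RM

theorem List.isChain_cons_append_singleton_iff_of_rel_eq_and {α : Type*} {p q : α → Prop}
    {a z : α} {l : List α} :
    (a :: (l ++ [z])).IsChain (fun x y => p x ∧ q y) ↔ p a ∧ q z ∧ ∀ y ∈ l, p y ∧ q y := by
  induction l generalizing a with
  | nil => simp
  | cons y l ih =>
    rw [List.cons_append, List.isChain_cons_cons, ih, List.forall_mem_cons]
    tauto

namespace RM

variable {I Λ : Type*} {P : Λ → I → Bool} {J : Set I} {Δ : Set Λ}

lemma rmul_ne_zero_iff (hP : ∀ (l : Λ) (i : I), P l i = true ↔ l ∈ Δ ∧ i ∈ J) {x y : RM I Λ} :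
    rmul P x y ≠ zero ↔ ColIn Δ x ∧ RowIn J y := by
  cases x <;> cases y <;> simp [rmul, ColIn, RowIn, ← hP]

theorem listProd_rmul_append_singleton_ne_zero_iff
    (hP : ∀ (l : Λ) (i : I), P l i = true ↔ l ∈ Δ ∧ i ∈ J) {a z : RM I Λ} {l : List (RM I Λ)} :
    listProd (rmul P) a (l ++ [z]) ≠ zero ↔
      ColIn Δ a ∧ RowIn J z ∧ ∀ y ∈ l, ColIn Δ y ∧ RowIn J y := by
  have hchain : ((a :: (l ++ [z])).IsChain fun x y => rmul P x y ≠ zero) ↔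
      ColIn Δ a ∧ RowIn J z ∧ ∀ y ∈ l, ColIn Δ y ∧ RowIn J y := by
    simp only [rmul_ne_zero_iff hP]
    exact List.isChain_cons_append_singleton_iff_of_rel_eq_and
  refine ⟨fun h => hchain.1 (by_contra fun hc => h (listProd_rmul_of_not_isChain P hc)),
    fun h => ?_⟩
  rw [listProd_rmul_of_isChain P (hchain.2 h)]
  simpa using bandMul_ne_zero h.1 h.2.1

end RM

theorem listProd_pmul_apply {I Λ : Type*} (P : Λ → I → Bool) {n : ℕ} (g : Fin n → RM I Λ)
    (gs : List (Fin n → RM I Λ)) (i : Fin n) :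
    listProd (pmul P) g gs i = listProd (rmul P) (g i) (gs.map (· i)) := by
  induction gs generalizing g with
  | nil => rfl
  | cons h gs ih => simp [listProd, pmul, ih]

open RM in
theorem stmt_11_general {I Λ : Type*} (P : Λ → I → Bool) (J : Set I) (Δ : Set Λ)
    (hP : ∀ (l : Λ) (i : I), P l i = true ↔ l ∈ Δ ∧ i ∈ J)
    (n : ℕ) (A : Set (Fin n → RM I Λ)) (b : Fin n → RM I Λ)
    (g₀ : Fin n → RM I Λ) (gs : List (Fin n → RM I Λ)) (hgs : gs ≠ [])
    (hgsA : ∀ x ∈ gs, x ∈ A)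
    (hb : listProd (pmul P) g₀ gs = b)
    (m : ℕ) (hm : ∀ i : Fin n, b i ≠ RM.zero ↔ (i : ℕ) < m)
    (L : List (Fin n → RM I Λ))
    (hL : ∀ x, x ∈ L ↔ x ∈ A ∧ ∀ i : Fin n, (i : ℕ) < m →
      ∃ j ∈ J, ∃ d ∈ Δ, x i = RM.elt j d) :
    listProd (pmul P) g₀ (L ++ [gs.getLast hgs]) = b := by
  set z := gs.getLast hgs
  set mid := gs.dropLast
  have hb_apply (i : Fin n) : b i = listProd (rmul P) (g₀ i) (mid.map (· i) ++ [z i]) := by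
    rw [← hb, listProd_pmul_apply, ← List.dropLast_append_getLast hgs, List.map_append,
      List.map_singleton]
  have hlt_iff (i : Fin n) :
      (i : ℕ) < m ↔ ColIn Δ (g₀ i) ∧ RowIn J (z i) ∧ ∀ g ∈ mid, ColIn Δ (g i) ∧ RowIn J (g i) := by
    rw [← hm, hb_apply, listProd_rmul_append_singleton_ne_zero_iff hP, List.forall_mem_map]
  have hmid : ∀ g ∈ mid, g ∈ L := fun g hg =>
    (hL g).2 ⟨hgsA g (List.mem_of_mem_dropLast hg),
      fun i hi => colIn_and_rowIn_iff.1 (((hlt_iff i).1 hi).2.2 g hg)⟩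
  funext i
  rw [listProd_pmul_apply, List.map_append, List.map_singleton, hb_apply]
  refine listProd_rmul_append_singleton_congr P ?_
  rw [listProd_rmul_append_singleton_ne_zero_iff hP, listProd_rmul_append_singleton_ne_zero_iff hP,
    List.forall_mem_map, List.forall_mem_map]
  constructor
  · rintro ⟨ha, hz, hLi⟩
    exact ⟨ha, hz, fun g hg => hLi g (hmid g hg)⟩
  · intro hold
    have hi := (hlt_iff i).2 hold
    exact ⟨hold.1, hold.2.1, fun g hg => colIn_and_rowIn_iff.2 (((hL g).1 hg).2 i hi)⟩

/-- Correctness of the key step of the polynomial-time algorithm: if `P` has one block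
(witnessed by `J ⊆ I`, `Δ ⊆ Λ`), `b ∉ A` is a product `g₁ ⋯ g_k` (`k ≥ 2`) of elements of
`A ⊆ S_P ^ n`, the nonzero coordinates of `b` are exactly those `< m`, and `L` enumerates
(without repetition, in some fixed order) those `a ∈ A` with `a i ∈ J × Δ` for all `i < m`,
then `g₁ · d · g_k = b` where `d` is the product of `L`. -/
theorem stmt_11 {I Λ : Type*} (P : Λ → I → Bool) (J : Set I) (Δ : Set Λ)
    (hP : ∀ (l : Λ) (i : I), P l i = true ↔ l ∈ Δ ∧ i ∈ J)
    (n : ℕ) (A : Set (Fin n → RM I Λ)) (b : Fin n → RM I Λ) (hbA : b ∉ A)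
    (g₀ : Fin n → RM I Λ) (gs : List (Fin n → RM I Λ)) (hgs : gs ≠ [])
    (hg₀ : g₀ ∈ A) (hgsA : ∀ x ∈ gs, x ∈ A)
    (hb : listProd (pmul P) g₀ gs = b)
    (m : ℕ) (hm : ∀ i : Fin n, b i ≠ RM.zero ↔ (i : ℕ) < m)
    (L : List (Fin n → RM I Λ)) (hnd : L.Nodup)
    (hL : ∀ x, x ∈ L ↔ x ∈ A ∧ ∀ i : Fin n, (i : ℕ) < m →
      ∃ j ∈ J, ∃ d ∈ Δ, x i = RM.elt j d) :
    listProd (pmul P) g₀ (L ++ [gs.getLast hgs]) = b :=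
  stmt_11_general P J Δ hP n A b g₀ gs hgs hgsA hb m hm L hL
end

section
/- Let S be a finite semigroup and s, t ∈ S such that sts = s and s does not generate a group. Then in S × S, the elements s' = (s, tst) and t' = (tst, s) satisfy: s't's' = s', t's't' = t', neither s' nor t' generates a group, and s'², t'² are strictly J-below s' in S × S. -/
/-!
From `s't's' = s'` we get `t' ≤_J s'`, so `s'²` and `t'²` both lie `J`-below `s'`. In a finite
semigroup an element `J`-equivalent to its square generates a group: from `a = u a² v` one pumps
`a = uⁿ a (av)ⁿ` until `(av)ⁿ` is idempotent, which gives `a = a² w`, and pumping again with an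
idempotent power `aᵏ` gives `aᵏ⁺¹ = a`. The projections of `S × S` are homomorphisms, and `s` does
not generate a group, so neither do `s'` and `t'`; hence both inequalities are strict.
-/

section Monoid

variable {M : Type*} [Monoid M]

theorem eq_pow_mul_mul_pow {a u v : M} (h : a = u * a * v) (n : ℕ) : a = u ^ n * a * v ^ n := by
  induction n with
  | zero => simp
  | succ n ih =>
    calc a = u ^ n * (u * a * v) * v ^ n := by rw [← h, ← ih]
      _ = u ^ (n + 1) * a * v ^ (n + 1) := by rw [pow_succ, pow_succ']; simp only [mul_assoc]

theorem exists_isIdempotentElem_pow [Finite M] (x : M) :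
    ∃ n, 0 < n ∧ IsIdempotentElem (x ^ n) := by
  obtain ⟨i, p, hp, h⟩ : ∃ i p, 0 < p ∧ x ^ i = x ^ (i + p) := by
    obtain ⟨i, j, hne, h⟩ := Finite.exists_ne_map_eq_of_infinite (fun n : ℕ => x ^ n)
    rcases hne.lt_or_gt with hlt | hlt
    exacts [⟨i, j - i, by omega, by rwa [Nat.add_sub_cancel' hlt.le]⟩,
      ⟨j, i - j, by omega, by rw [Nat.add_sub_cancel' hlt.le, h]⟩]
  have hper : ∀ c, x ^ i = x ^ i * x ^ (p * c) := by
    intro c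
    induction c with
    | zero => simp
    | succ c ih => rw [mul_add, mul_one, pow_add, ← mul_assoc, ← ih, ← pow_add, ← h]
  -- any multiple of the period `p` that is at least `i` will do
  obtain ⟨r, hr⟩ : ∃ r, p * (i + 1) = r + i :=
    ⟨p * (i + 1) - i, by have := Nat.le_mul_of_pos_left (i + 1) hp; omega⟩
  refine ⟨p * (i + 1), by positivity, ?_⟩
  calc x ^ (p * (i + 1)) * x ^ (p * (i + 1)) = x ^ r * (x ^ i * x ^ (p * (i + 1))) := by
        rw [hr, pow_add, mul_assoc]
    _ = x ^ (p * (i + 1)) := by rw [← hper, ← pow_add, hr]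

theorem exists_pow_succ_eq_self_of_eq_mul_sq_mul [Finite M] {a u v : M}
    (h : a = u * (a * a) * v) : ∃ k, 0 < k ∧ a ^ (k + 1) = a := by
  obtain ⟨n, hn, hidem⟩ := exists_isIdempotentElem_pow (a * v)
  obtain ⟨m, rfl⟩ : ∃ m, n = m + 1 := ⟨n - 1, by omega⟩
  have hright : a = a * (a * v) ^ (m + 1) := by
    have hpump := eq_pow_mul_mul_pow (u := u) (v := a * v) (h.trans (by simp only [mul_assoc]))
      (m + 1)
    calc a = u ^ (m + 1) * a * (a * v) ^ (m + 1) * (a * v) ^ (m + 1) := by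
          rw [hidem.mul_mul_self, ← hpump]
      _ = a * (a * v) ^ (m + 1) := by rw [← hpump]
  have hsq : a = a * a * (v * (a * v) ^ m) := by
    rw [mul_assoc a a, ← mul_assoc a v, ← pow_succ']
    exact hright
  obtain ⟨k, hk, hidem'⟩ := exists_isIdempotentElem_pow a
  have hpump := eq_pow_mul_mul_pow hsq k
  refine ⟨k, hk, ?_⟩
  calc a ^ (k + 1) = a ^ k * (a ^ k * a * (v * (a * v) ^ m) ^ k) := by rw [pow_succ, ← hpump]
    _ = a ^ k * a * (v * (a * v) ^ m) ^ k := by rw [← mul_assoc, ← mul_assoc, hidem'.eq]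
    _ = a := hpump.symm

end Monoid

section GeneratesGroup

variable {S T : Type*} [Semigroup S] [Semigroup T]

theorem GeneratesGroup.map {a : S} (h : GeneratesGroup a) (f : S →ₙ* T) :
    GeneratesGroup (f a) := by
  have hC : Subsemigroup.closure {f a} = (Subsemigroup.closure {a}).map f := by
    rw [MulHom.map_mclosure, Set.image_singleton]
  obtain ⟨e, he, hid, hinv⟩ := h
  refine ⟨f e, hC ▸ ⟨e, he, rfl⟩, ?_, ?_⟩
  · rw [hC]
    rintro _ ⟨x, hx, rfl⟩
    simp only [← map_mul, (hid x hx).1, (hid x hx).2, and_self]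
  · rw [hC]
    rintro _ ⟨x, hx, rfl⟩
    obtain ⟨y, hy, hxy, hyx⟩ := hinv x hx
    exact ⟨f y, ⟨y, hy, rfl⟩, by rw [← map_mul, hxy], by rw [← map_mul, hyx]⟩

theorem generatesGroup_of_mul_eq {a e b : S} (he : e ∈ Subsemigroup.closure {a})
    (hb : b ∈ Subsemigroup.closure {a}) (hea : e * a = a) (hab : a * b = e) :
    GeneratesGroup a := by
  set C := Subsemigroup.closure {a}
  have hcomm : ∀ x ∈ C, ∀ y ∈ C, x * y = y * x := fun x hx y hy =>
    Set.centralizer_centralizer_comm_of_comm (by simp) x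
      (Subsemigroup.closure_le_centralizer_centralizer _ hx) y
      (Subsemigroup.closure_le_centralizer_centralizer _ hy)
  have hleft : ∀ x ∈ C, e * x = x := fun x hx => by
    induction hx using Subsemigroup.closure_induction with
    | mem y hy => rw [Set.mem_singleton_iff.1 hy, hea]
    | mul y z _ _ ihy _ => rw [← mul_assoc, ihy]
  have hright : ∀ x ∈ C, x * e = x := fun x hx => by rw [hcomm x hx e he, hleft x hx]
  refine ⟨e, he, fun x hx => ⟨hleft x hx, hright x hx⟩, fun x hx => ?_⟩
  suffices ∃ y ∈ C, x * y = e from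
    let ⟨y, hy, hxy⟩ := this; ⟨y, hy, hxy, by rw [← hcomm x hx y hy, hxy]⟩
  induction hx using Subsemigroup.closure_induction with
  | mem y hy => exact ⟨b, hb, by rw [Set.mem_singleton_iff.1 hy, hab]⟩
  | mul y z hy _ ihy ihz =>
    obtain ⟨y', hy', hyy'⟩ := ihy
    obtain ⟨z', hz', hzz'⟩ := ihz
    refine ⟨z' * y', C.mul_mem hz' hy', ?_⟩
    calc y * z * (z' * y') = y * (z * z') * y' := by simp only [mul_assoc]
      _ = e := by rw [hzz', hright y hy, hyy']

theorem exists_mem_closure_coe_eq_pow (a : S) (n : ℕ) :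
    ∃ x ∈ Subsemigroup.closure {a}, (x : WithOne S) = (a : WithOne S) ^ (n + 1) := by
  induction n with
  | zero => exact ⟨a, Subsemigroup.subset_closure rfl, (pow_one _).symm⟩
  | succ n ih =>
    obtain ⟨x, hx, hxa⟩ := ih
    exact ⟨x * a, Subsemigroup.mul_mem _ hx (Subsemigroup.subset_closure rfl),
      by rw [WithOne.coe_mul, hxa, ← pow_succ]⟩

/-- With `aᵐ⁺² = a`, the identity of the cyclic group is `aᵐ⁺¹` and the inverse of `a` is
`a²ᵐ⁺¹`. -/
theorem generatesGroup_of_coe_pow_eq {a : S} {m : ℕ}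
    (h : (a : WithOne S) ^ (m + 2) = a) : GeneratesGroup a := by
  obtain ⟨e, he, hea⟩ := exists_mem_closure_coe_eq_pow a m
  obtain ⟨b, hb, hba⟩ := exists_mem_closure_coe_eq_pow a (2 * m)
  refine generatesGroup_of_mul_eq he hb (WithOne.coe_inj.1 ?_) (WithOne.coe_inj.1 ?_)
  · rw [WithOne.coe_mul, hea, ← pow_succ, h]
  · rw [WithOne.coe_mul, hea, hba, ← pow_succ', show 2 * m + 1 + 1 = m + 2 + m by ring, pow_add, h,
      ← pow_succ']

end GeneratesGroup

section JOrder

variable {S : Type*} [Semigroup S]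

theorem JLe.trans {a b c : S} (hab : JLe a b) (hbc : JLe b c) : JLe a c := by
  obtain ⟨u, v, huv⟩ := hab
  obtain ⟨u', v', huv'⟩ := hbc
  exact ⟨u * u', v' * v, by rw [huv, huv']; simp only [mul_assoc]⟩

theorem jLe_mul_mul (x y z : S) : JLe (x * y * z) y :=
  ⟨x, z, by rw [WithOne.coe_mul, WithOne.coe_mul]⟩

theorem jLe_mul_right (x y : S) : JLe (x * y) x :=
  ⟨1, y, by rw [WithOne.coe_mul, one_mul]⟩

instance [Finite S] : Finite (WithOne S) := inferInstanceAs (Finite (Option S))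

theorem generatesGroup_of_jLe_mul_self [Finite S] {a : S} (h : JLe a (a * a)) :
    GeneratesGroup a := by
  obtain ⟨u, v, huv⟩ := h
  rw [WithOne.coe_mul] at huv
  obtain ⟨k, hk, hpow⟩ := exists_pow_succ_eq_self_of_eq_mul_sq_mul huv
  obtain ⟨m, rfl⟩ : ∃ m, k = m + 1 := ⟨k - 1, by omega⟩
  exact generatesGroup_of_coe_pow_eq hpow

end JOrder

/-- If `sts = s` in a finite semigroup and `s` does not generate a group, then in `S × S`
the elements `s' = (s, tst)` and `t' = (tst, s)` satisfy `s't's' = s'`, `t's't' = t'`,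
neither generates a group, and `s'²`, `t'²` are strictly `J`-below `s'`. -/
theorem stmt_16 {S : Type*} [Semigroup S] [Finite S] (s t : S)
    (h1 : s * t * s = s) (hng : ¬ GeneratesGroup s) :
    let s' : S × S := (s, t * s * t)
    let t' : S × S := (t * s * t, s)
    s' * t' * s' = s' ∧ t' * s' * t' = t' ∧
      ¬ GeneratesGroup s' ∧ ¬ GeneratesGroup t' ∧
      JLt (s' * s') s' ∧ JLt (t' * t') s' := by
  intro s' t'
  have h1_mul : ∀ x, s * (t * (s * x)) = s * x := fun x => by rw [← mul_assoc, ← mul_assoc, h1]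
  have hs : s * (t * s * t) * s = s := by simp only [mul_assoc, h1_mul, h1]
  have ht : t * s * t * s * (t * s * t) = t * s * t := by simp only [mul_assoc, h1_mul]
  have e1 : s' * t' * s' = s' := Prod.ext hs ht
  have e2 : t' * s' * t' = t' := Prod.ext ht hs
  have hs' : ¬ GeneratesGroup s' := fun h => hng (h.map (MulHom.fst S S))
  have ht' : ¬ GeneratesGroup t' := fun h => hng (h.map (MulHom.snd S S))
  have hts : JLe t' s' := e2 ▸ jLe_mul_mul t' s' t'
  refine ⟨e1, e2, hs', ht', ⟨jLe_mul_right s' s', fun h => hs' (generatesGroup_of_jLe_mul_self h)⟩,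
    ⟨(jLe_mul_right t' t').trans hts, fun h => ht' (generatesGroup_of_jLe_mul_self (hts.trans h))⟩⟩
end
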